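/- arXiv:1309.3113 — 10 statements merged into one kernel-verified Lean document; each statement's English description precedes it below -/
import Mathlib

section
/- Every bounded lattice L has a canonical extension: there exist a complete lattice C and an injective bounded-lattice homomorphism e : L → C that is dense and compact. -/
/-- An element `x` of a complete lattice is completely join-irreducible if
`x ∈ S` whenever `x = ⨆ S`. -/
def CompletelyJoinIrreducible {C : Type*} [CompleteLattice C] (x : C) : Prop :=
  ∀ S : Set C, x = sSup S → x ∈ S

/-- An element `y` of a complete lattice is completely meet-irreducible if
`y ∈ S` whenever `y = ⨅ S`. -/
def CompletelyMeetIrreducible {C : Type*} [CompleteLattice C] (y : C) : Prop :=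
  ∀ S : Set C, y = sInf S → y ∈ S

/-- `e : L → C` is a canonical extension of the bounded lattice `L`: an injective
bounded-lattice homomorphism into a complete lattice `C` which is dense and compact. -/
def IsCanonicalExtension {L C : Type*} [Lattice L] [BoundedOrder L] [CompleteLattice C]
    (e : L → C) : Prop :=
  Function.Injective e ∧
  (∀ a b : L, e (a ⊓ b) = e a ⊓ e b) ∧
  (∀ a b : L, e (a ⊔ b) = e a ⊔ e b) ∧
  e ⊥ = ⊥ ∧ e ⊤ = ⊤ ∧
  -- denseness
  (∀ u : C,
    u = sSup {v : C | ∃ S : Set L, v = sInf (e '' S) ∧ v ≤ u} ∧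
    u = sInf {v : C | ∃ T : Set L, v = sSup (e '' T) ∧ u ≤ v}) ∧
  -- compactness
  (∀ S T : Set L, sInf (e '' S) ≤ sSup (e '' T) →
    ∃ S' T' : Finset L, ↑S' ⊆ S ∧ ↑T' ⊆ T ∧ S'.inf id ≤ T'.sup id)

universe u

namespace CanExt

variable (L : Type u) [Lattice L] [BoundedOrder L]

/-- Lattice filters of `L`. -/
structure Flt : Type u where
  s : Set L
  top_mem : ⊤ ∈ s
  inf_mem : ∀ {a b : L}, a ∈ s → b ∈ s → a ⊓ b ∈ s
  up_mem : ∀ {a b : L}, a ∈ s → a ≤ b → b ∈ s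

/-- Lattice ideals of `L`. -/
structure Idl : Type u where
  s : Set L
  bot_mem : ⊥ ∈ s
  sup_mem : ∀ {a b : L}, a ∈ s → b ∈ s → a ⊔ b ∈ s
  down_mem : ∀ {a b : L}, a ∈ s → b ≤ a → b ∈ s

variable {L}

def pfilt (a : L) : Flt L :=
  ⟨{x | a ≤ x}, le_top, fun h1 h2 => le_inf h1 h2, fun h1 h2 => h1.trans h2⟩

def pidl (a : L) : Idl L :=
  ⟨{x | x ≤ a}, bot_le, fun h1 h2 => sup_le h1 h2, fun h1 h2 => h2.trans h1⟩

def rho (A : Set (Flt L)) : Set (Idl L) := {I | ∀ F ∈ A, (F.s ∩ I.s).Nonempty}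

def lam (B : Set (Idl L)) : Set (Flt L) := {F | ∀ I ∈ B, (F.s ∩ I.s).Nonempty}

def cl (A : Set (Flt L)) : Set (Flt L) := lam (rho A)

theorem subset_cl (A : Set (Flt L)) : A ⊆ cl A := fun F hF I hI => hI F hF

theorem rho_anti {A A' : Set (Flt L)} (h : A ⊆ A') : rho A' ⊆ rho A :=
  fun I hI F hF => hI F (h hF)

theorem lam_anti {B B' : Set (Idl L)} (h : B ⊆ B') : lam B' ⊆ lam B :=
  fun F hF I hI => hF I (h hI)

theorem cl_mono {A A' : Set (Flt L)} (h : A ⊆ A') : cl A ⊆ cl A' :=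
  lam_anti (rho_anti h)

theorem subset_rho_lam (B : Set (Idl L)) : B ⊆ rho (lam B) := fun I hI F hF => hF I hI

theorem cl_lam (B : Set (Idl L)) : cl (lam B) = lam B :=
  Set.Subset.antisymm (lam_anti (subset_rho_lam B)) (subset_cl _)

def pt (a : L) : Set (Flt L) := {F | a ∈ F.s}

theorem rho_pt (a : L) : rho (pt a) = {I : Idl L | a ∈ I.s} := by
  ext I
  constructor
  · intro hI
    obtain ⟨x, hx1, hx2⟩ := hI (pfilt a) (le_refl a)
    exact I.down_mem hx2 hx1
  · intro hI F hF
    exact ⟨a, hF, hI⟩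

theorem lam_ipt (a : L) : lam {I : Idl L | a ∈ I.s} = pt a := by
  ext F
  constructor
  · intro hF
    obtain ⟨x, hx1, hx2⟩ := hF (pidl a) (le_refl a)
    exact F.up_mem hx1 hx2
  · intro hF I hI
    exact ⟨a, hF, hI⟩

theorem cl_pt (a : L) : cl (pt a) = pt a := by
  rw [cl, rho_pt, lam_ipt]

variable (L)

/-- The canonical extension: Galois-closed sets of filters. -/
def Ext : Type u := {A : Set (Flt L) // cl A = A}

instance : PartialOrder (Ext L) := Subtype.partialOrder _

instance : InfSet (Ext L) :=
  ⟨fun S => ⟨{F | ∀ A ∈ S, F ∈ A.1},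
    Set.Subset.antisymm
      (fun F hF A hA => by
        have h1 : cl {F | ∀ A ∈ S, F ∈ A.1} ⊆ cl A.1 :=
          cl_mono (fun G hG => hG A hA)
        rw [A.2] at h1
        exact h1 hF)
      (subset_cl _)⟩⟩

noncomputable instance : CompleteLattice (Ext L) :=
  completeLatticeOfInf _ (fun S =>
    ⟨fun A hA F hF => hF A hA, fun B hB F hF A hA => hB hA hF⟩)

variable {L}

theorem sInf_carrier (S : Set (Ext L)) : (sInf S).1 = {F | ∀ A ∈ S, F ∈ A.1} := rfl

/-- The embedding. -/
def emb (a : L) : Ext L := ⟨pt a, cl_pt a⟩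

theorem le_carrier {A B : Ext L} (h : A ≤ B) : A.1 ⊆ B.1 := h

theorem mem_of_mem_cl {A : Ext L} {F : Flt L} (h : F ∈ cl A.1) : F ∈ A.1 := by
  rw [← A.2]; exact h

theorem sInf_emb_carrier (S : Set L) :
    (sInf (emb '' S) : Ext L).1 = {F : Flt L | ∀ a ∈ S, a ∈ F.s} := by
  rw [sInf_carrier]
  ext F
  constructor
  · intro hF a ha
    exact hF (emb a) ⟨a, ha, rfl⟩
  · rintro hF A ⟨a, ha, rfl⟩
    exact hF a ha

theorem mem_sInf_emb {S : Set L} {F : Flt L} :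
    F ∈ (sInf (emb '' S) : Ext L).1 ↔ ∀ a ∈ S, a ∈ F.s := by
  rw [sInf_emb_carrier]
  exact Iff.rfl

theorem sSup_carrier (S : Set (Ext L)) :
    (sSup S).1 = cl (⋃ A ∈ S, A.1) := by
  set U : Set (Flt L) := ⋃ A ∈ S, A.1 with hU
  have hcl : cl (cl U) = cl U := cl_lam _
  set D : Ext L := ⟨cl U, hcl⟩ with hD
  have h1 : sSup S ≤ D := by
    apply sSup_le
    intro A hA
    exact fun F hF => subset_cl U (Set.mem_biUnion hA hF)
  have h2 : D ≤ sSup S := by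
    have hU2 : U ⊆ (sSup S).1 := by
      intro F hF
      obtain ⟨A, hA, hF⟩ := Set.mem_iUnion₂.1 hF
      exact le_carrier (le_sSup hA) hF
    have := cl_mono hU2
    rw [(sSup S).2] at this
    exact this
  have : sSup S = D := le_antisymm h1 h2
  rw [this]

theorem emb_le_iff {a b : L} : emb a ≤ emb b ↔ a ≤ b := by
  constructor
  · intro h
    have hx : pfilt a ∈ (emb a).1 := le_refl a
    exact le_carrier h hx
  · intro h F hF
    exact F.up_mem hF h

theorem emb_injective : Function.Injective (emb (L := L)) := by
  intro a b h
  exact le_antisymm (emb_le_iff.1 h.le) (emb_le_iff.1 h.ge)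

theorem emb_inf (a b : L) : emb (a ⊓ b) = emb a ⊓ emb b := by
  have hclD : cl (pt a ∩ pt b) = pt a ∩ pt b := by
    apply Set.Subset.antisymm _ (subset_cl _)
    intro F hF
    constructor
    · have h1 : cl (pt a ∩ pt b) ⊆ cl (pt a) := cl_mono Set.inter_subset_left
      rw [cl_pt] at h1; exact h1 hF
    · have h1 : cl (pt a ∩ pt b) ⊆ cl (pt b) := cl_mono Set.inter_subset_right
      rw [cl_pt] at h1; exact h1 hF
  set D : Ext L := ⟨pt a ∩ pt b, hclD⟩ with hD
  have h1 : D = emb a ⊓ emb b := by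
    apply le_antisymm
    · exact le_inf (fun F hF => hF.1) (fun F hF => hF.2)
    · intro F hF
      exact ⟨le_carrier (inf_le_left (a := emb a) (b := emb b)) hF,
             le_carrier (inf_le_right (a := emb a) (b := emb b)) hF⟩
  rw [← h1]
  apply Subtype.ext
  ext F
  constructor
  · intro hF
    exact ⟨F.up_mem hF inf_le_left, F.up_mem hF inf_le_right⟩
  · intro hF
    exact F.inf_mem hF.1 hF.2

theorem emb_sup (a b : L) : emb (a ⊔ b) = emb a ⊔ emb b := by
  apply le_antisymm
  · -- pt (a ⊔ b) ⊆ (emb a ⊔ emb b).1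
    intro F hF
    apply mem_of_mem_cl
    intro I hI
    have ha : a ∈ I.s := by
      have hxa : pfilt a ∈ (emb a).1 := le_refl a
      obtain ⟨x, hx1, hx2⟩ := hI (pfilt a) (le_carrier (le_sup_left (a := emb a) (b := emb b)) hxa)
      exact I.down_mem hx2 hx1
    have hb : b ∈ I.s := by
      have hxb : pfilt b ∈ (emb b).1 := le_refl b
      obtain ⟨x, hx1, hx2⟩ := hI (pfilt b) (le_carrier (le_sup_right (a := emb a) (b := emb b)) hxb)
      exact I.down_mem hx2 hx1
    exact ⟨a ⊔ b, hF, I.sup_mem ha hb⟩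
  · exact sup_le (fun F hF => F.up_mem hF le_sup_left)
      (fun F hF => F.up_mem hF le_sup_right)

theorem emb_bot : emb (⊥ : L) = ⊥ := by
  apply le_antisymm _ bot_le
  have h : ∀ u : Ext L, emb (⊥ : L) ≤ u := by
    intro u
    intro F hF
    apply mem_of_mem_cl
    intro I _
    exact ⟨⊥, hF, I.bot_mem⟩
  exact h ⊥

theorem emb_top : emb (⊤ : L) = ⊤ := by
  apply le_antisymm le_top
  intro F _
  exact F.top_mem


theorem dense_join (u : Ext L) :
    u = sSup {v : Ext L | ∃ S : Set L, v = sInf (emb '' S) ∧ v ≤ u} := by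
  apply le_antisymm
  · intro F hF
    set v : Ext L := sInf (emb '' F.s) with hv
    have hvu : v ≤ u := by
      intro G hG
      have hG' : F.s ⊆ G.s := fun a ha => mem_sInf_emb.1 hG a ha
      apply mem_of_mem_cl
      intro I hI
      obtain ⟨x, hx1, hx2⟩ := hI F hF
      exact ⟨x, hG' hx1, hx2⟩
    have hmem : v ∈ {v : Ext L | ∃ S : Set L, v = sInf (emb '' S) ∧ v ≤ u} :=
      ⟨F.s, rfl, hvu⟩
    have hFv : F ∈ v.1 := mem_sInf_emb.2 (fun a ha => ha)
    exact le_carrier (le_sSup hmem) hFv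
  · exact sSup_le (fun v hv => by obtain ⟨S, _, h⟩ := hv; exact h)

theorem sSup_emb_carrier_subset {T : Set L} {I : Idl L} (hTI : T ⊆ I.s) :
    (sSup (emb '' T) : Ext L).1 ⊆ {F : Flt L | (F.s ∩ I.s).Nonempty} := by
  rw [sSup_carrier]
  intro F hF
  apply hF I
  intro G hG
  obtain ⟨A, hA, hG⟩ := Set.mem_iUnion₂.1 hG
  obtain ⟨b, hb, rfl⟩ := hA
  exact ⟨b, hG, hTI hb⟩

theorem dense_meet (u : Ext L) :
    u = sInf {v : Ext L | ∃ T : Set L, v = sSup (emb '' T) ∧ u ≤ v} := by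
  apply le_antisymm
  · exact le_sInf (fun v hv => by obtain ⟨T, _, h⟩ := hv; exact h)
  · intro F hF
    -- show F ∈ u.1 = lam (rho u.1)
    apply mem_of_mem_cl
    intro I hI
    -- consider v_I = sSup (emb '' I.s)
    have huv : u ≤ sSup (emb '' I.s) := by
      intro G hG
      have hG2 : G ∈ cl (⋃ A ∈ emb '' I.s, A.1) := by
        intro J hJ
        have hIJ : I.s ⊆ J.s := by
          intro a ha
          have hpa : pfilt a ∈ ⋃ A ∈ emb '' I.s, (A : Ext L).1 :=
            Set.mem_biUnion (⟨a, ha, rfl⟩ : emb a ∈ emb '' I.s) (le_refl a)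
          obtain ⟨x, hx1, hx2⟩ := hJ (pfilt a) hpa
          exact J.down_mem hx2 hx1
        obtain ⟨x, hx1, hx2⟩ := hI G hG
        exact ⟨x, hx1, hIJ hx2⟩
      show G ∈ (sSup (emb '' I.s) : Ext L).1
      rw [sSup_carrier]
      exact hG2
    have hFv : F ∈ (sSup (emb '' I.s) : Ext L).1 :=
      hF _ ⟨I.s, rfl, huv⟩
    exact sSup_emb_carrier_subset (Set.Subset.refl I.s) hFv

theorem compactness (S T : Set L)
    (h : (sInf (emb '' S) : Ext L) ≤ sSup (emb '' T)) :
    ∃ S' T' : Finset L, ↑S' ⊆ S ∧ ↑T' ⊆ T ∧ S'.inf id ≤ T'.sup id := by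
  classical
  set F0 : Flt L := ⟨{x | ∃ S' : Finset L, ↑S' ⊆ S ∧ S'.inf id ≤ x},
    ⟨∅, by simp, le_top⟩,
    by
      rintro a b ⟨S1, h1, h2⟩ ⟨S2, h3, h4⟩
      refine ⟨S1 ∪ S2, ?_, ?_⟩
      · rw [Finset.coe_union]; exact Set.union_subset h1 h3
      · exact le_inf ((Finset.inf_mono Finset.subset_union_left).trans h2)
          ((Finset.inf_mono Finset.subset_union_right).trans h4),
    by
      rintro a b ⟨S1, h1, h2⟩ hab
      exact ⟨S1, h1, h2.trans hab⟩⟩ with hF0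
  set I0 : Idl L := ⟨{x | ∃ T' : Finset L, ↑T' ⊆ T ∧ x ≤ T'.sup id},
    ⟨∅, by simp, bot_le⟩,
    by
      rintro a b ⟨T1, h1, h2⟩ ⟨T2, h3, h4⟩
      refine ⟨T1 ∪ T2, ?_, ?_⟩
      · rw [Finset.coe_union]; exact Set.union_subset h1 h3
      · exact sup_le (h2.trans (Finset.sup_mono Finset.subset_union_left))
          (h4.trans (Finset.sup_mono Finset.subset_union_right)),
    by
      rintro a b ⟨T1, h1, h2⟩ hab
      exact ⟨T1, h1, hab.trans h2⟩⟩ with hI0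
  have hF0mem : F0 ∈ (sInf (emb '' S) : Ext L).1 :=
    mem_sInf_emb.2 (fun a ha => ⟨{a}, by simpa using ha, by simp⟩)
  have hTI : T ⊆ I0.s := by
    intro b hb
    exact ⟨{b}, by simpa using hb, by simp⟩
  have := sSup_emb_carrier_subset hTI (le_carrier h hF0mem)
  obtain ⟨x, ⟨S', hS1, hS2⟩, ⟨T', hT1, hT2⟩⟩ := this
  exact ⟨S', T', hS1, hT1, hS2.trans hT2⟩

end CanExt


/-- Every bounded lattice has a canonical extension. -/
theorem exists_canonicalExtension (L : Type u) [iL : Lattice L] [bL : BoundedOrder L] :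
    ∃ (C : Type u) (instC : CompleteLattice C) (e : L → C),
      @IsCanonicalExtension L C iL bL instC e := by
  exact ⟨CanExt.Ext L, inferInstance, CanExt.emb,
    CanExt.emb_injective, CanExt.emb_inf, CanExt.emb_sup,
    CanExt.emb_bot, CanExt.emb_top,
    fun u => ⟨CanExt.dense_join u, CanExt.dense_meet u⟩,
    CanExt.compactness⟩
end

section
/- If e : L → C and e' : L → C' are two canonical extensions of a bounded lattice L, then there exists an order isomorphism φ : C → C' (a complete lattice isomorphism) such that φ ∘ e = e'. -/
/-!
By compactness, whether a closed element `⨅ e[S]` lies below an open element `⨆ e[T]` is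
decided in `L`, hence is the same in `C` and in `C'`. So `u ↦ ⨆ {⨅ e'[S] | ⨅ e[S] ≤ u}` is a
monotone map `C → C'` fixing `L`, and since every element is both the join of the closed
elements below it and the meet of the open elements above it, the analogous map `C' → C`
inverts it.
-/

namespace IsCanonicalExtension

variable {L C D : Type*} [Lattice L] [BoundedOrder L] [CompleteLattice C] [CompleteLattice D]
  {e : L → C}

def toBoundedLatticeHom (h : IsCanonicalExtension e) : BoundedLatticeHom L C where
  toFun := e
  map_sup' := h.2.2.1
  map_inf' := h.2.1
  map_top' := h.2.2.2.2.1
  map_bot' := h.2.2.2.1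

@[simp]
theorem coe_toBoundedLatticeHom (h : IsCanonicalExtension e) : ⇑h.toBoundedLatticeHom = e :=
  rfl

theorem le_of_forall_sInf_image_le (h : IsCanonicalExtension e) {u v : C}
    (H : ∀ S : Set L, sInf (e '' S) ≤ u → sInf (e '' S) ≤ v) : u ≤ v := by
  rw [(h.2.2.2.2.2.1 u).1]
  exact sSup_le fun _ ⟨S, hw, hS⟩ => hw ▸ H S (hw ▸ hS)

theorem le_of_forall_le_sSup_image (h : IsCanonicalExtension e) {u v : C}
    (H : ∀ T : Set L, v ≤ sSup (e '' T) → u ≤ sSup (e '' T)) : u ≤ v := by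
  rw [(h.2.2.2.2.2.1 v).2]
  exact le_sInf fun _ ⟨T, hw, hT⟩ => hw ▸ H T (hw ▸ hT)

theorem sInf_image_le_sSup_image_of_le (h : IsCanonicalExtension e) (f : BoundedLatticeHom L D)
    {S T : Set L} (hST : sInf (e '' S) ≤ sSup (e '' T)) : sInf (f '' S) ≤ sSup (f '' T) := by
  obtain ⟨S', T', hS', hT', hle⟩ := h.2.2.2.2.2.2 S T hST
  calc sInf (f '' S) ≤ S'.inf f := Finset.le_inf fun a ha => sInf_le ⟨a, hS' ha, rfl⟩
    _ = f (S'.inf id) := (map_finset_inf f S' id).symm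
    _ ≤ f (T'.sup id) := OrderHomClass.mono f hle
    _ = T'.sup f := map_finset_sup f T' id
    _ ≤ sSup (f '' T) := Finset.sup_le fun a ha => le_sSup ⟨a, hT' ha, rfl⟩

end IsCanonicalExtension

section Comparison

variable {L C D : Type*} [CompleteLattice C] [CompleteLattice D]

noncomputable def canonicalComparison (e : L → C) (f : L → D) (u : C) : D :=
  ⨆ (S : Set L) (_ : sInf (e '' S) ≤ u), sInf (f '' S)

theorem canonicalComparison_mono (e : L → C) (f : L → D) : Monotone (canonicalComparison e f) :=
  fun _ _ huv => iSup₂_mono' fun S hS => ⟨S, hS.trans huv, le_rfl⟩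

theorem sInf_image_le_canonicalComparison {e : L → C} {f : L → D} {S : Set L} {u : C}
    (hS : sInf (e '' S) ≤ u) : sInf (f '' S) ≤ canonicalComparison e f u :=
  le_iSup₂ (f := fun S (_ : sInf (e '' S) ≤ u) => sInf (f '' S)) S hS

variable [Lattice L] [BoundedOrder L]

theorem canonicalComparison_le_sSup_image {e : L → C} (h : IsCanonicalExtension e)
    (f : BoundedLatticeHom L D) {T : Set L} {u : C} (hT : u ≤ sSup (e '' T)) :
    canonicalComparison e f u ≤ sSup (f '' T) :=
  iSup₂_le fun _ hS => h.sInf_image_le_sSup_image_of_le f (hS.trans hT)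

theorem canonicalComparison_apply {e : L → C} (h : IsCanonicalExtension e)
    (f : BoundedLatticeHom L D) (a : L) : canonicalComparison e f (e a) = f a := by
  apply le_antisymm
  · simpa using canonicalComparison_le_sSup_image h f (T := {a}) (by simp)
  · simpa using sInf_image_le_canonicalComparison (f := f) (S := {a}) (u := e a) (by simp)

theorem canonicalComparison_canonicalComparison {e : L → C} {f : L → D}
    (h : IsCanonicalExtension e) (hf : IsCanonicalExtension f) (u : C) :
    canonicalComparison f e (canonicalComparison e f u) = u := by
  apply le_antisymm
  · refine h.le_of_forall_le_sSup_image fun T hT => ?_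
    simpa using canonicalComparison_le_sSup_image hf h.toBoundedLatticeHom
      (by simpa using canonicalComparison_le_sSup_image h hf.toBoundedLatticeHom hT)
  · exact h.le_of_forall_sInf_image_le fun S hS =>
      sInf_image_le_canonicalComparison (sInf_image_le_canonicalComparison hS)

end Comparison

/-- Uniqueness of the canonical extension: any two canonical extensions of a bounded
lattice `L` are linked by a complete lattice (order) isomorphism commuting with the
embeddings. -/
theorem canonicalExtension_unique {L C C' : Type*} [Lattice L] [BoundedOrder L]
    [CompleteLattice C] [CompleteLattice C'] (e : L → C) (e' : L → C')
    (h : IsCanonicalExtension e) (h' : IsCanonicalExtension e') :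
    ∃ φ : C ≃o C', ∀ a : L, φ (e a) = e' a :=
  let φ : C ≃ C' :=
    ⟨canonicalComparison e e', canonicalComparison e' e,
      canonicalComparison_canonicalComparison h h',
      canonicalComparison_canonicalComparison h' h⟩
  ⟨φ.toOrderIso (canonicalComparison_mono e e') (canonicalComparison_mono e' e),
    canonicalComparison_apply h h'.toBoundedLatticeHom⟩
end

section
/- Let e : L → C be a canonical extension of a bounded lattice L. Then: (1) for all finite T, U ⊆ L, ⟨T⟩_ai ⊆ ⟨U⟩_ai if and only if ⋃_{a∈T} â ⊆ ⋃_{b∈U} b̂ (in particular the assignment ⟨T⟩_ai ↦ ⋃_{a∈T} â is well-defined and an order embedding of the finitely generated a-ideals of L, ordered by inclusion, into the powerset of J∞(C)); and (2) a subset of J∞(C) belongs to the sublattice of the powerset of J∞(C) generated by {â : a ∈ L} (under union and intersection) if and only if it equals ⋃_{a∈T} â for some finite T ⊆ L. Hence this assignment is an order isomorphism onto that sublattice. -/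
/-- A finite subset `M` of a bounded lattice is join-admissible if its join
distributes over all meets with elements of the lattice. -/
def JoinAdmissible {L : Type*} [Lattice L] [BoundedOrder L] (M : Finset L) : Prop :=
  ∀ a : L, a ⊓ M.sup id = M.sup fun m => a ⊓ m

/-- An a-ideal: a downward-closed subset closed under admissible joins. -/
def IsAIdeal {L : Type*} [Lattice L] [BoundedOrder L] (A : Set L) : Prop :=
  (∀ a ∈ A, ∀ b, b ≤ a → b ∈ A) ∧
  ∀ M : Finset L, ↑M ⊆ A → JoinAdmissible M → M.sup id ∈ A

/-- The smallest a-ideal containing `T`. -/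
def aIdealGen {L : Type*} [Lattice L] [BoundedOrder L] (T : Set L) : Set L :=
  ⋂₀ {A : Set L | IsAIdeal A ∧ T ⊆ A}

/-- `â`: the set of completely join-irreducible elements of `C` below `e a`. -/
def hatSet {L C : Type*} [Lattice L] [BoundedOrder L] [CompleteLattice C]
    (e : L → C) (a : L) : Set C :=
  {x : C | CompletelyJoinIrreducible x ∧ x ≤ e a}

/-- The sublattice of the powerset of `α` generated by a family `G` of subsets:
the smallest collection containing `G` closed under binary unions and intersections. -/
def latticeGen {α : Type*} (G : Set (Set α)) : Set (Set α) :=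
  ⋂₀ {F : Set (Set α) | G ⊆ F ∧ (∀ A ∈ F, ∀ B ∈ F, A ∪ B ∈ F) ∧
      (∀ A ∈ F, ∀ B ∈ F, A ∩ B ∈ F)}

/-!
Completely join-irreducible elements are join-dense in a canonical extension. By density of
closed and open elements it suffices to treat `⨅ e[S₀] ≰ ⨆ e[T]`; Zorn's lemma (chains are
handled by compactness) gives a maximal `S ⊇ S₀` with `⨅ e[S] ≰ ⨆ e[T]`, and maximality makes
`⨅ e[S]` completely join-irreducible. Each such `j` is prime for join-admissible joins: if
`j ≤ e (⋁ M)`, compactness and admissibility give `j ≤ ⋁_{m ∈ M} (j ⊓ e m)`, so `j ≤ e m` for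
some `m ∈ M`. Primeness makes `{a | â ⊆ B}` an a-ideal, and density turns `â ⊆ ⋃_{b ∈ U} b̂`
into the admissible decomposition `a = ⋁_{b ∈ U} (a ⊓ b)`; hence
`a ∈ ⟨U⟩_ai ↔ â ⊆ ⋃_{b ∈ U} b̂`, which is (1). Part (2) holds because `(a ⊓ b)^ = â ∩ b̂` and
`⊥^ = ∅`.
-/

open Set

section AIdeal

variable {L : Type*} [Lattice L] [BoundedOrder L]

theorem isAIdeal_aIdealGen (T : Set L) : IsAIdeal (aIdealGen T) :=
  ⟨fun a ha b hba A hA => hA.1.1 a (ha A hA) b hba,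
    fun M hM hadm A hA => hA.1.2 M (fun _ hm => hM hm A hA) hadm⟩

theorem subset_aIdealGen (T : Set L) : T ⊆ aIdealGen T := fun _ ht _ hA => hA.2 ht

theorem aIdealGen_subset_iff {T A : Set L} (hA : IsAIdeal A) : aIdealGen T ⊆ A ↔ T ⊆ A :=
  ⟨(subset_aIdealGen T).trans, fun hTA _ hx => hx A ⟨hA, hTA⟩⟩

end AIdeal

section LatticeGen

variable {α : Type*} {G : Set (Set α)}

theorem subset_latticeGen : G ⊆ latticeGen G := fun _ hA _ hF => hF.1 hA

theorem union_mem_latticeGen {A B : Set α} (hA : A ∈ latticeGen G) (hB : B ∈ latticeGen G) :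
    A ∪ B ∈ latticeGen G :=
  fun F hF => hF.2.1 _ (hA F hF) _ (hB F hF)

theorem latticeGen_subset {F : Set (Set α)} (hG : G ⊆ F) (hunion : ∀ A ∈ F, ∀ B ∈ F, A ∪ B ∈ F)
    (hinter : ∀ A ∈ F, ∀ B ∈ F, A ∩ B ∈ F) : latticeGen G ⊆ F :=
  fun _ hA => hA F ⟨hG, hunion, hinter⟩

theorem mem_latticeGen_iff_exists_finset_biUnion {ι : Type*} {f : ι → Set α}
    (hinter : ∀ i j, ∃ k, f k = f i ∩ f j) (hempty : ∃ i, f i = ∅) {B : Set α} :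
    B ∈ latticeGen {S | ∃ i, S = f i} ↔ ∃ T : Finset ι, B = ⋃ i ∈ T, f i := by
  classical
  constructor
  · refine fun hB => latticeGen_subset (F := {B | ∃ T : Finset ι, B = ⋃ i ∈ T, f i})
      ?_ ?_ ?_ hB
    · rintro _ ⟨i, rfl⟩
      exact ⟨{i}, by simp⟩
    · rintro _ ⟨T, rfl⟩ _ ⟨U, rfl⟩
      exact ⟨T ∪ U, (Finset.set_biUnion_union T U f).symm⟩
    · rintro _ ⟨T, rfl⟩ _ ⟨U, rfl⟩
      choose k hk using hinter
      refine ⟨(T ×ˢ U).image fun p => k p.1 p.2, ?_⟩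
      ext x
      simp only [Finset.set_biUnion_finset_image, hk, mem_inter_iff, mem_iUnion, Finset.mem_product,
        exists_prop, Prod.exists]
      constructor
      · rintro ⟨⟨i, hi, hxi⟩, j, hj, hxj⟩
        exact ⟨i, j, ⟨hi, hj⟩, hxi, hxj⟩
      · rintro ⟨i, j, ⟨hi, hj⟩, hxi, hxj⟩
        exact ⟨⟨i, hi, hxi⟩, j, hj, hxj⟩
  · rintro ⟨T, rfl⟩
    induction T using Finset.induction_on with
    | empty =>
      obtain ⟨i, hi⟩ := hempty
      simpa [hi] using subset_latticeGen (G := {S | ∃ i, S = f i}) ⟨i, rfl⟩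
    | insert i T _ ih =>
      rw [Finset.set_biUnion_insert]
      exact union_mem_latticeGen (subset_latticeGen ⟨i, rfl⟩) ih

end LatticeGen

theorem exists_orderIso_of_le_iff {ι α β : Type*} [PartialOrder α] [PartialOrder β]
    {f : ι → α} {g : ι → β} (hfg : ∀ i j, f i ≤ f j ↔ g i ≤ g j) :
    ∃ φ : {a // ∃ i, a = f i} ≃o {b // ∃ i, b = g i},
      ∀ i (a : {a // ∃ i, a = f i}), (a : α) = f i → (φ a : β) = g i := by
  have hg : ∀ i j, f i = f j → g i = g j := fun i j hij =>
    le_antisymm ((hfg i j).mp hij.le) ((hfg j i).mp hij.ge)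
  let φ : {a // ∃ i, a = f i} ↪o {b // ∃ i, b = g i} :=
    OrderEmbedding.ofMapLEIff (fun a => ⟨g a.2.choose, _, rfl⟩) fun a b => by
      rw [Subtype.mk_le_mk, ← hfg, ← a.2.choose_spec, ← b.2.choose_spec]
      rfl
  refine ⟨OrderIso.ofSurjective φ ?_, fun i a ha => hg _ _ (a.2.choose_spec.symm.trans ha)⟩
  rintro ⟨_, i, rfl⟩
  exact ⟨⟨f i, i, rfl⟩,
    Subtype.ext (hg _ _ (Exists.choose_spec (⟨i, rfl⟩ : ∃ j, f i = f j)).symm)⟩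

theorem CompletelyJoinIrreducible.ne_bot {C : Type*} [CompleteLattice C] {x : C}
    (hx : CompletelyJoinIrreducible x) : x ≠ ⊥ := by
  rintro rfl
  exact hx ∅ sSup_empty.symm

theorem sInf_image_setOf_sInf_image_le {α β : Type*} [CompleteLattice β] (f : α → β)
    (S : Set α) : sInf (f '' {a | sInf (f '' S) ≤ f a}) = sInf (f '' S) :=
  le_antisymm (sInf_le_sInf (image_mono fun _ ha => sInf_le (mem_image_of_mem f ha)))
    (le_sInf (by rintro _ ⟨a, ha, rfl⟩; exact ha))

namespace IsCanonicalExtension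

variable {L C : Type*} [Lattice L] [BoundedOrder L] [CompleteLattice C] {e : L → C}

theorem injective (h : IsCanonicalExtension e) : Function.Injective e := h.1

theorem map_inf (h : IsCanonicalExtension e) (a b : L) : e (a ⊓ b) = e a ⊓ e b := h.2.1 a b

theorem map_sup (h : IsCanonicalExtension e) (a b : L) : e (a ⊔ b) = e a ⊔ e b := h.2.2.1 a b

theorem map_bot (h : IsCanonicalExtension e) : e ⊥ = ⊥ := h.2.2.2.1

theorem map_top (h : IsCanonicalExtension e) : e ⊤ = ⊤ := h.2.2.2.2.1

theorem eq_sSup_closed (h : IsCanonicalExtension e) (u : C) :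
    u = sSup {v | ∃ S : Set L, v = sInf (e '' S) ∧ v ≤ u} :=
  (h.2.2.2.2.2.1 u).1

theorem eq_sInf_open (h : IsCanonicalExtension e) (u : C) :
    u = sInf {v | ∃ T : Set L, v = sSup (e '' T) ∧ u ≤ v} :=
  (h.2.2.2.2.2.1 u).2

theorem compact (h : IsCanonicalExtension e) {S T : Set L}
    (hST : sInf (e '' S) ≤ sSup (e '' T)) :
    ∃ S' T' : Finset L, ↑S' ⊆ S ∧ ↑T' ⊆ T ∧ S'.inf id ≤ T'.sup id :=
  h.2.2.2.2.2.2 S T hST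

theorem monotone (h : IsCanonicalExtension e) : Monotone e := fun a b hab =>
  inf_eq_left.mp (by rw [← h.map_inf, inf_eq_left.mpr hab])

theorem le_iff (h : IsCanonicalExtension e) {a b : L} : e a ≤ e b ↔ a ≤ b :=
  ⟨fun hab => inf_eq_left.mp (h.injective (by rw [h.map_inf, inf_eq_left.mpr hab])),
    fun hab => h.monotone hab⟩

theorem map_finset_sup (h : IsCanonicalExtension e) {ι : Type*} (s : Finset ι) (f : ι → L) :
    e (s.sup f) = s.sup (e ∘ f) :=
  Finset.apply_sup_eq_sup_comp e h.map_sup h.map_bot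

theorem map_finset_inf (h : IsCanonicalExtension e) {ι : Type*} (s : Finset ι) (f : ι → L) :
    e (s.inf f) = s.inf (e ∘ f) :=
  Finset.apply_inf_eq_inf_comp e h.map_inf h.map_top

theorem sInf_image_le_map_finset_inf (h : IsCanonicalExtension e) {S : Set L} {S' : Finset L}
    (hS' : ↑S' ⊆ S) : sInf (e '' S) ≤ e (S'.inf id) := by
  rw [h.map_finset_inf]
  exact Finset.le_inf fun a ha => sInf_le ⟨a, hS' ha, rfl⟩

theorem map_finset_sup_le_sSup_image (h : IsCanonicalExtension e) {T : Set L} {T' : Finset L}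
    (hT' : ↑T' ⊆ T) : e (T'.sup id) ≤ sSup (e '' T) := by
  rw [h.map_finset_sup]
  exact Finset.sup_le fun a ha => le_sSup ⟨a, hT' ha, rfl⟩

theorem exists_finset_subset_map_inf_le (h : IsCanonicalExtension e) {S T : Set L}
    (hST : sInf (e '' S) ≤ sSup (e '' T)) :
    ∃ S' : Finset L, ↑S' ⊆ S ∧ e (S'.inf id) ≤ sSup (e '' T) := by
  obtain ⟨S', T', hS', hT', hle⟩ := h.compact hST
  exact ⟨S', hS', (h.monotone hle).trans (h.map_finset_sup_le_sSup_image hT')⟩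

theorem le_of_forall_closed (h : IsCanonicalExtension e) {u w : C}
    (H : ∀ S : Set L, sInf (e '' S) ≤ u → sInf (e '' S) ≤ w) : u ≤ w :=
  (h.eq_sSup_closed u).trans_le <| sSup_le <| by
    rintro _ ⟨S, rfl, hSu⟩
    exact H S hSu

theorem le_of_forall_open (h : IsCanonicalExtension e) {u w : C}
    (H : ∀ T : Set L, w ≤ sSup (e '' T) → u ≤ sSup (e '' T)) : u ≤ w :=
  (le_sInf <| by rintro _ ⟨T, rfl, hwT⟩; exact H T hwT).trans_eq (h.eq_sInf_open w).symm

theorem exists_eq_sInf_of_completelyJoinIrreducible (h : IsCanonicalExtension e) {j : C}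
    (hj : CompletelyJoinIrreducible j) : ∃ S : Set L, j = sInf (e '' S) := by
  obtain ⟨S, hS, -⟩ := hj _ (h.eq_sSup_closed j)
  exact ⟨S, hS⟩

theorem exists_maximal_not_sInf_le (h : IsCanonicalExtension e) {S₀ T : Set L}
    (hS₀ : ¬ sInf (e '' S₀) ≤ sSup (e '' T)) :
    ∃ S, S₀ ⊆ S ∧ Maximal (fun S => ¬ sInf (e '' S) ≤ sSup (e '' T)) S := by
  refine zorn_subset_nonempty {S | ¬ sInf (e '' S) ≤ sSup (e '' T)}
    (fun c hc hchain hne => ⟨⋃₀ c, fun hle => ?_, fun _ => subset_sUnion_of_mem⟩) S₀ hS₀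
  obtain ⟨S', hS', hS'le⟩ := h.exists_finset_subset_map_inf_le hle
  rw [sUnion_eq_biUnion] at hS'
  obtain ⟨S, hSc, hS'S⟩ :=
    DirectedOn.exists_mem_subset_of_finset_subset_biUnion hne hchain.directedOn hS'
  exact hc hSc ((h.sInf_image_le_map_finset_inf hS'S).trans hS'le)

theorem le_of_lt_of_maximal (h : IsCanonicalExtension e) {Sm T : Set L}
    (hmax : Maximal (fun S => ¬ sInf (e '' S) ≤ sSup (e '' T)) Sm) {s : C}
    (hs : s < sInf (e '' Sm)) : s ≤ sSup (e '' T) :=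
  h.le_of_forall_closed fun S hSs => by
    by_contra hS
    have hsub : Sm ⊆ {a | sInf (e '' S) ≤ e a} := fun a ha =>
      (hSs.trans hs.le).trans (sInf_le (mem_image_of_mem e ha))
    have heq := hmax.eq_of_subset (by rwa [sInf_image_setOf_sInf_image_le]) hsub
    rw [heq, sInf_image_setOf_sInf_image_le] at hs
    exact hs.not_ge hSs

theorem completelyJoinIrreducible_of_maximal (h : IsCanonicalExtension e) {Sm T : Set L}
    (hmax : Maximal (fun S => ¬ sInf (e '' S) ≤ sSup (e '' T)) Sm) :
    CompletelyJoinIrreducible (sInf (e '' Sm)) := by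
  intro U hU
  by_contra hj
  refine hmax.prop (hU ▸ sSup_le fun s hs => h.le_of_lt_of_maximal hmax ?_)
  exact (hU ▸ le_sSup hs).lt_of_ne fun hsj => hj (hsj ▸ hs)

theorem le_of_forall_completelyJoinIrreducible (h : IsCanonicalExtension e) {u w : C}
    (H : ∀ j, CompletelyJoinIrreducible j → j ≤ u → j ≤ w) : u ≤ w :=
  h.le_of_forall_closed fun S₀ hS₀u => h.le_of_forall_open fun T hwT => by
    by_contra hS₀T
    obtain ⟨Sm, hS₀Sm, hmax⟩ := h.exists_maximal_not_sInf_le hS₀T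
    have hju : sInf (e '' Sm) ≤ u := (sInf_le_sInf (image_mono hS₀Sm)).trans hS₀u
    exact hmax.prop ((H _ (h.completelyJoinIrreducible_of_maximal hmax) hju).trans hwT)

theorem exists_le_map_and_map_inf_le (h : IsCanonicalExtension e) {S T : Set L} {m : L}
    (hle : sInf (e '' S) ⊓ e m ≤ sSup (e '' T)) :
    ∃ a, sInf (e '' S) ≤ e a ∧ e (a ⊓ m) ≤ sSup (e '' T) := by
  classical
  rw [inf_comm, ← sInf_insert, ← image_insert_eq] at hle
  obtain ⟨S', hS', hS'le⟩ := h.exists_finset_subset_map_inf_le hle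
  refine ⟨(S'.erase m).inf id, h.sInf_image_le_map_finset_inf fun a ha => ?_,
    (h.monotone (Finset.le_inf fun s hs => ?_)).trans hS'le⟩
  · obtain ⟨hne, ha⟩ := Finset.mem_erase.mp ha
    exact (hS' ha).resolve_left hne
  · by_cases hsm : s = m
    · exact hsm ▸ inf_le_right
    · exact inf_le_left.trans (Finset.inf_le (Finset.mem_erase.mpr ⟨hsm, hs⟩))

theorem sInf_le_sup_inf_of_joinAdmissible (h : IsCanonicalExtension e) {S : Set L}
    {M : Finset L} (hM : JoinAdmissible M) (hle : sInf (e '' S) ≤ e (M.sup id)) :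
    sInf (e '' S) ≤ M.sup fun m => sInf (e '' S) ⊓ e m := by
  refine h.le_of_forall_open fun T hT => ?_
  choose! a hSa haT using fun m (hm : m ∈ M) => h.exists_le_map_and_map_inf_le
    ((Finset.le_sup (f := fun m => sInf (e '' S) ⊓ e m) hm).trans hT)
  set a₀ := M.sup id ⊓ M.inf a
  calc sInf (e '' S) ≤ e a₀ := by
        rw [h.map_inf, h.map_finset_inf]
        exact le_inf hle (Finset.le_inf hSa)
    _ = e (M.sup fun m => a₀ ⊓ m) := by rw [← hM a₀, inf_eq_left.mpr inf_le_left]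
    _ = M.sup fun m => e (a₀ ⊓ m) := h.map_finset_sup _ _
    _ ≤ sSup (e '' T) := Finset.sup_le fun m hm =>
        (h.monotone (inf_le_inf_right m (inf_le_right.trans (Finset.inf_le hm)))).trans (haT m hm)

theorem exists_le_of_le_map_sup (h : IsCanonicalExtension e) {j : C}
    (hj : CompletelyJoinIrreducible j) {M : Finset L} (hM : JoinAdmissible M)
    (hle : j ≤ e (M.sup id)) : ∃ m ∈ M, j ≤ e m := by
  obtain ⟨S, rfl⟩ := h.exists_eq_sInf_of_completelyJoinIrreducible hj
  have hjM := h.sInf_le_sup_inf_of_joinAdmissible hM hle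
  obtain ⟨m, hm, hjm⟩ := hj ((fun m => sInf (e '' S) ⊓ e m) '' M) <| by
    rw [← Finset.sup_eq_sSup_image]
    exact le_antisymm hjM (Finset.sup_le fun _ _ => inf_le_left)
  exact ⟨m, hm, inf_eq_left.mp hjm⟩

theorem hatSet_mono (h : IsCanonicalExtension e) : Monotone (hatSet e) :=
  fun _ _ hab _ hx => ⟨hx.1, hx.2.trans (h.monotone hab)⟩

theorem hatSet_inf (h : IsCanonicalExtension e) (a b : L) :
    hatSet e (a ⊓ b) = hatSet e a ∩ hatSet e b := by
  ext x
  change _ ∧ x ≤ e (a ⊓ b) ↔ (_ ∧ x ≤ e a) ∧ (_ ∧ x ≤ e b)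
  rw [h.map_inf, le_inf_iff, and_and_left]

theorem hatSet_bot (h : IsCanonicalExtension e) : hatSet e ⊥ = ∅ :=
  eq_empty_of_forall_notMem fun _ hx => hx.1.ne_bot (le_bot_iff.mp (h.map_bot ▸ hx.2))

theorem isAIdeal_setOf_hatSet_subset (h : IsCanonicalExtension e) (B : Set C) :
    IsAIdeal {a | hatSet e a ⊆ B} :=
  ⟨fun _ ha _ hba => (h.hatSet_mono hba).trans ha, fun M hM hadm x hx => by
    obtain ⟨m, hm, hxm⟩ := h.exists_le_of_le_map_sup hx.1 hadm hx.2
    exact hM hm ⟨hx.1, hxm⟩⟩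

theorem le_sup_inf_of_hatSet_subset (h : IsCanonicalExtension e) {a : L} {U : Finset L}
    (hU : hatSet e a ⊆ ⋃ b ∈ U, hatSet e b) : a ≤ U.sup (a ⊓ ·) := by
  refine h.le_iff.mp (h.le_of_forall_completelyJoinIrreducible fun x hx hxa => ?_)
  obtain ⟨b, hb, -, hxb⟩ := mem_iUnion₂.mp (hU ⟨hx, hxa⟩)
  calc x ≤ e (a ⊓ b) := (h.map_inf a b).symm ▸ le_inf hxa hxb
    _ ≤ e (U.sup (a ⊓ ·)) := h.monotone (Finset.le_sup (f := (a ⊓ ·)) hb)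

theorem mem_aIdealGen_of_hatSet_subset (h : IsCanonicalExtension e) {a : L} {U : Finset L}
    (hU : hatSet e a ⊆ ⋃ b ∈ U, hatSet e b) : a ∈ aIdealGen (U : Set L) := by
  classical
  have hsup : ∀ c ≤ a, c = U.sup (c ⊓ ·) := fun c hca =>
    le_antisymm (h.le_sup_inf_of_hatSet_subset ((h.hatSet_mono hca).trans hU))
      (Finset.sup_le fun _ _ => inf_le_left)
  set M := U.image (a ⊓ ·)
  have hMa : M.sup id = a := by
    rw [Finset.sup_image]
    exact (hsup a le_rfl).symm
  have hadm : JoinAdmissible M := fun c => by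
    rw [hMa, Finset.sup_image]
    calc c ⊓ a = U.sup (c ⊓ a ⊓ ·) := hsup _ inf_le_right
      _ = _ := by simp only [Function.comp_def, inf_assoc]
  have hMU : ↑M ⊆ aIdealGen (U : Set L) := by
    intro m hm
    obtain ⟨b, hb, rfl⟩ := Finset.mem_image.mp hm
    exact (isAIdeal_aIdealGen _).1 b (subset_aIdealGen _ hb) _ inf_le_right
  exact hMa ▸ (isAIdeal_aIdealGen _).2 M hMU hadm

theorem mem_aIdealGen_iff (h : IsCanonicalExtension e) {a : L} {U : Finset L} :
    a ∈ aIdealGen (U : Set L) ↔ hatSet e a ⊆ ⋃ b ∈ U, hatSet e b :=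
  ⟨fun ha => (aIdealGen_subset_iff (h.isAIdeal_setOf_hatSet_subset _)).mpr
      (fun _ hb => subset_biUnion_of_mem hb) ha,
    h.mem_aIdealGen_of_hatSet_subset⟩

theorem aIdealGen_subset_aIdealGen_iff (h : IsCanonicalExtension e) (T U : Finset L) :
    aIdealGen (T : Set L) ⊆ aIdealGen (U : Set L) ↔
      (⋃ a ∈ T, hatSet e a) ⊆ ⋃ b ∈ U, hatSet e b := by
  rw [aIdealGen_subset_iff (isAIdeal_aIdealGen _), iUnion₂_subset_iff]
  exact forall₂_congr fun _ _ => h.mem_aIdealGen_iff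

theorem mem_latticeGen_hatSet_iff (h : IsCanonicalExtension e) (B : Set C) :
    B ∈ latticeGen {S : Set C | ∃ a : L, S = hatSet e a} ↔
      ∃ T : Finset L, B = ⋃ a ∈ T, hatSet e a :=
  mem_latticeGen_iff_exists_finset_biUnion (fun a b => ⟨a ⊓ b, h.hatSet_inf a b⟩)
    ⟨⊥, h.hatSet_bot⟩

end IsCanonicalExtension

/-- The map `⟨T⟩_ai ↦ ⋃_{a ∈ T} â` is a well-defined order isomorphism from the poset of
finitely generated a-ideals of `L` (ordered by inclusion) onto the sublattice of the
powerset of `J∞(C)` generated by the sets `â`. -/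
theorem aIdealGen_orderIso_latticeGen {L C : Type*} [Lattice L] [BoundedOrder L]
    [CompleteLattice C] (e : L → C) (h : IsCanonicalExtension e) :
    -- (1) order embedding / well-definedness
    (∀ T U : Finset L,
      aIdealGen (T : Set L) ⊆ aIdealGen (U : Set L) ↔
        (⋃ a ∈ T, hatSet e a) ⊆ ⋃ b ∈ U, hatSet e b) ∧
    -- (2) the generated sublattice consists exactly of the finite unions of the `â`
    (∀ B : Set C, B ∈ latticeGen {S : Set C | ∃ a : L, S = hatSet e a} ↔
      ∃ T : Finset L, B = ⋃ a ∈ T, hatSet e a) ∧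
    -- hence: an order isomorphism
    ∃ φ : {A : Set L // ∃ T : Finset L, A = aIdealGen (T : Set L)} ≃o
        {B : Set C // B ∈ latticeGen {S : Set C | ∃ a : L, S = hatSet e a}},
      ∀ (T : Finset L) (I : {A : Set L // ∃ T : Finset L, A = aIdealGen (T : Set L)}),
        (I : Set L) = aIdealGen (T : Set L) → (φ I : Set C) = ⋃ a ∈ T, hatSet e a := by
  have hle := h.aIdealGen_subset_aIdealGen_iff
  have hmem := h.mem_latticeGen_hatSet_iff
  obtain ⟨φ, hφ⟩ := exists_orderIso_of_le_iff hle
  exact ⟨hle, hmem, φ.trans (OrderIso.setCongr {B | ∃ T : Finset L, B = ⋃ a ∈ T, hatSet e a} _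
    (Set.ext fun B => (hmem B).symm)), hφ⟩
end

section
/- Let L be a bounded lattice and M ⊆ L a finite join-admissible subset. Then the a-ideal generated by M is the principal downset of ⋁M, i.e. ⟨M⟩_ai = {b ∈ L : b ≤ ⋁M}. Consequently, the map a ↦ ↓a = {b : b ≤ a} from L into the a-ideals of L preserves finite meets and admissible joins (where the join of a-ideals is the a-ideal generated by their union). -/
lemma isAIdeal_Iic {L : Type*} [Lattice L] [BoundedOrder L] (s : L) :
    IsAIdeal (Set.Iic s) := by
  constructor
  · exact fun a ha b hb => le_trans hb ha
  · intro M hM _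
    exact Finset.sup_le fun m hm => hM hm

lemma gen_eq {L : Type*} [Lattice L] [BoundedOrder L] (M : Finset L)
    (hM : JoinAdmissible M) : aIdealGen (M : Set L) = {b : L | b ≤ M.sup id} := by
  apply le_antisymm
  · intro b hb
    exact hb (Set.Iic (M.sup id)) ⟨isAIdeal_Iic _, fun m hm => Finset.le_sup (f := id) hm⟩
  · intro b hb A ⟨hA, hMA⟩
    exact hA.1 _ (hA.2 M hMA hM) b hb

/-- For a join-admissible finite `M`, the a-ideal generated by `M` is the principal
downset of `⋁ M`. Consequently, `a ↦ ↓a` preserves finite meets and admissible joins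
(where the join of a-ideals is the a-ideal generated by their union). -/
theorem aIdealGen_joinAdmissible_eq_Iic (L : Type*) [Lattice L] [BoundedOrder L] :
    (∀ M : Finset L, JoinAdmissible M →
      aIdealGen (M : Set L) = {b : L | b ≤ M.sup id}) ∧
    -- `↓·` preserves finite meets
    Set.Iic (⊤ : L) = Set.univ ∧
    (∀ a b : L, Set.Iic (a ⊓ b) = Set.Iic a ∩ Set.Iic b) ∧
    -- `↓·` preserves admissible joins
    (∀ M : Finset L, JoinAdmissible M →
      Set.Iic (M.sup id) = aIdealGen (⋃ m ∈ M, Set.Iic m)) := by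
  refine ⟨gen_eq, ?_, fun a b => Set.Iic_inter_Iic.symm, ?_⟩
  · ext x; simp
  · intro M hM
    have : {b : L | b ≤ M.sup id} = Set.Iic (M.sup id) := rfl
    rw [← this, ← gen_eq M hM]
    apply le_antisymm <;> apply Set.sInter_subset_sInter
    · rintro A ⟨hA, h⟩
      exact ⟨hA, fun m hm => h (Set.mem_iUnion.2 ⟨m, Set.mem_iUnion.2 ⟨hm, le_refl m⟩⟩)⟩
    · rintro A ⟨hA, h⟩
      refine ⟨hA, fun x hx => ?_⟩
      simp only [Set.mem_iUnion] at hx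
      obtain ⟨m, hm, hxm⟩ := hx
      exact hA.1 _ (h hm) x hxm
end

section
/- Let f : L₁ → L₂ be a surjective function between bounded lattices which preserves finite meets and admissible joins. Then f sends join-admissible sets to join-admissible sets: for every finite join-admissible M ⊆ L₁, the image f[M] is join-admissible in L₂. -/
/-- A surjective function between bounded lattices preserving finite meets and admissible
joins sends join-admissible sets to join-admissible sets. -/
theorem surjective_preserves_joinAdmissible {L₁ L₂ : Type*}
    [Lattice L₁] [BoundedOrder L₁] [Lattice L₂] [BoundedOrder L₂] [DecidableEq L₂]
    (f : L₁ → L₂) (hsurj : Function.Surjective f)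
    (htop : f ⊤ = ⊤) (hmeet : ∀ a b : L₁, f (a ⊓ b) = f a ⊓ f b)
    (hadm : ∀ M : Finset L₁, JoinAdmissible M → f (M.sup id) = M.sup f)
    (M : Finset L₁) (hM : JoinAdmissible M) :
    JoinAdmissible (M.image f) := by
  classical
  intro b
  obtain ⟨a, rfl⟩ := hsurj b
  have hsupM : (M.image f).sup id = f (M.sup id) := by
    rw [Finset.sup_image]
    exact (hadm M hM).symm
  set M' : Finset L₁ := M.image (fun m => a ⊓ m) with hM'
  have hM'adm : JoinAdmissible M' := by
    intro c
    rw [hM', Finset.sup_image, Finset.sup_image]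
    simp only [Function.comp_def, id_eq]
    have h1 : (M.sup fun m => a ⊓ m) = a ⊓ M.sup id := (hM a).symm
    rw [h1, ← inf_assoc, hM (c ⊓ a)]
    apply Finset.sup_congr rfl
    intro m _
    rw [inf_assoc]
  have key := hadm M' hM'adm
  rw [hM', Finset.sup_image, Finset.sup_image] at key
  simp only [Function.comp_def, id_eq] at key
  rw [hsupM, ← hmeet, hM a, Finset.sup_image]
  simp only [Function.comp_def, id_eq]
  rw [key]
  apply Finset.sup_congr rfl
  intro m _
  rw [hmeet]
end

section
/- Let L be a bounded lattice, D a bounded distributive lattice, and f : L → D a function such that (i) f preserves finite meets and admissible joins, (ii) f is injective, and (iii) f[L] is join-dense in D in the sense that every d ∈ D is the join of a finite subset of f[L]. Then the map ⟨T⟩_ai ↦ ⋁_{t∈T} f(t) is a well-defined order isomorphism from the poset of finitely generated a-ideals of L (ordered by inclusion) onto D. -/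
section Aux
variable {L D : Type*} [Lattice L] [BoundedOrder L] [DistribLattice D] [BoundedOrder D]
  {f : L → D} (hinj : Function.Injective f)
  (hmeet : ∀ a b : L, f (a ⊓ b) = f a ⊓ f b)
  (hadm : ∀ M : Finset L, JoinAdmissible M → f (M.sup id) = M.sup f)

include hmeet in
lemma fmono' {a b : L} (h : a ≤ b) : f a ≤ f b := by
  have h2 := hmeet a b
  rw [inf_eq_left.mpr h] at h2
  rw [h2]; exact inf_le_right

include hmeet hinj in
lemma freflect' {a b : L} (h : f a ≤ f b) : a ≤ b := by
  have h2 : f (a ⊓ b) = f a := by rw [hmeet]; exact inf_eq_left.mpr h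
  exact inf_eq_left.mp (hinj h2)

include hinj hmeet hadm in
lemma mem_aIdealGen_iff' (T : Finset L) (a : L) :
    a ∈ aIdealGen (T : Set L) ↔ f a ≤ T.sup f := by
  classical
  constructor
  · intro ha
    exact ha {x | f x ≤ T.sup f} ⟨⟨fun x hx b hb => le_trans (fmono' hmeet hb) hx,
      fun M hM hadmM => by
        simp only [Set.mem_setOf_eq, hadm M hadmM]
        exact Finset.sup_le fun m hm => hM hm⟩,
      fun t ht => Finset.le_sup ht⟩
  · intro ha A hA
    obtain ⟨⟨hdown, hjoin⟩, hTA⟩ := hA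
    set M : Finset L := T.image (fun t => a ⊓ t) with hMdef
    have hfa : f a = M.sup f := by
      conv_lhs => rw [← inf_eq_left.mpr ha, Finset.sup_inf_distrib_left]
      rw [hMdef, Finset.sup_image]
      exact Finset.sup_congr rfl fun t _ => (hmeet a t).symm
    have hMle : ∀ m ∈ M, m ≤ a := by
      intro m hm
      rw [hMdef] at hm
      obtain ⟨t, _, rfl⟩ := Finset.mem_image.mp hm
      exact inf_le_left
    have hsup : M.sup id = a := by
      refine le_antisymm (Finset.sup_le hMle) (freflect' hinj hmeet ?_)
      rw [hfa]
      exact Finset.sup_le fun m hm => fmono' hmeet (Finset.le_sup (f := id) hm)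
    have hadmM : JoinAdmissible M := by
      intro b
      refine le_antisymm (freflect' hinj hmeet ?_) (Finset.sup_le fun m hm =>
        inf_le_inf_left b (Finset.le_sup (f := id) hm))
      rw [hmeet, hsup]
      calc f b ⊓ f a = M.sup fun m => f b ⊓ f m := by
            rw [hfa, Finset.sup_inf_distrib_left]
        _ ≤ f (M.sup fun m => b ⊓ m) := Finset.sup_le fun m hm => by
            rw [← hmeet]
            exact fmono' hmeet (Finset.le_sup (f := fun m => b ⊓ m) hm)
    have hmem : M.sup id ∈ A := by
      apply hjoin M _ hadmM
      intro m hm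
      obtain ⟨t, ht, rfl⟩ := Finset.mem_image.mp (Finset.mem_coe.mp hm)
      exact hdown t (hTA ht) _ inf_le_right
    rwa [hsup] at hmem

include hinj hmeet hadm in
lemma aIdealGen_subset_iff' (T S : Finset L) :
    aIdealGen (T : Set L) ⊆ aIdealGen (S : Set L) ↔ T.sup f ≤ S.sup f := by
  constructor
  · intro h
    refine Finset.sup_le fun t ht => ?_
    exact (mem_aIdealGen_iff' hinj hmeet hadm S t).mp
      (h ((mem_aIdealGen_iff' hinj hmeet hadm T t).mpr (Finset.le_sup ht)))
  · intro h a ha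
    exact (mem_aIdealGen_iff' hinj hmeet hadm S a).mpr
      (le_trans ((mem_aIdealGen_iff' hinj hmeet hadm T a).mp ha) h)

end Aux

/-- If `f : L → D` is injective, preserves finite meets and admissible joins, and has
join-dense image in the bounded distributive lattice `D`, then `⟨T⟩_ai ↦ ⋁_{t ∈ T} f t`
is a well-defined order isomorphism from the poset of finitely generated a-ideals of `L`
(ordered by inclusion) onto `D`. -/
theorem distributiveEnvelope_characterization {L D : Type*} [Lattice L] [BoundedOrder L]
    [DistribLattice D] [BoundedOrder D] (f : L → D) (hinj : Function.Injective f)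
    (htop : f ⊤ = ⊤) (hmeet : ∀ a b : L, f (a ⊓ b) = f a ⊓ f b)
    (hadm : ∀ M : Finset L, JoinAdmissible M → f (M.sup id) = M.sup f)
    (hdense : ∀ d : D, ∃ T : Finset L, d = T.sup f) :
    ∃ φ : {A : Set L // ∃ T : Finset L, A = aIdealGen (T : Set L)} ≃o D,
      ∀ (T : Finset L) (I : {A : Set L // ∃ T : Finset L, A = aIdealGen (T : Set L)}),
        (I : Set L) = aIdealGen (T : Set L) → φ I = T.sup f := by
  classical
  have subiff := aIdealGen_subset_iff' (f := f) hinj hmeet hadm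
  have geneq : ∀ T S : Finset L, T.sup f = S.sup f →
      aIdealGen (T : Set L) = aIdealGen (S : Set L) :=
    fun T S h => le_antisymm ((subiff T S).mpr h.le) ((subiff S T).mpr h.ge)
  have supeq : ∀ T S : Finset L, aIdealGen (T : Set L) = aIdealGen (S : Set L) →
      T.sup f = S.sup f :=
    fun T S h => le_antisymm ((subiff T S).mp h.le) ((subiff S T).mp h.ge)
  let φfun : {A : Set L // ∃ T : Finset L, A = aIdealGen (T : Set L)} → D :=
    fun I => (I.2.choose).sup f
  have hφ : ∀ (T : Finset L) (I : {A : Set L // ∃ T : Finset L, A = aIdealGen (T : Set L)}),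
      (I : Set L) = aIdealGen (T : Set L) → φfun I = T.sup f := by
    intro T I hI
    exact supeq _ _ (I.2.choose_spec.symm.trans hI)
  refine ⟨⟨Equiv.mk φfun
    (fun d => ⟨aIdealGen ((hdense d).choose : Set L), (hdense d).choose, rfl⟩) ?_ ?_, ?_⟩, hφ⟩
  · intro I
    apply Subtype.ext
    show aIdealGen _ = (I : Set L)
    rw [I.2.choose_spec]
    exact geneq _ _ (hdense (φfun I)).choose_spec.symm
  · intro d
    show φfun _ = d
    rw [hφ (hdense d).choose _ rfl]
    exact (hdense d).choose_spec.symm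
  · intro I J
    show φfun I ≤ φfun J ↔ I ≤ J
    constructor
    · intro h
      show (I : Set L) ⊆ (J : Set L)
      rw [I.2.choose_spec, J.2.choose_spec]
      exact (subiff _ _).mpr h
    · intro h
      refine (subiff _ _).mp ?_
      rw [← I.2.choose_spec, ← J.2.choose_spec]
      exact h
end

section
/- There exist finite bounded lattices L₁, L₂, L₃, a bounded lattice homomorphism f : L₁ → L₂, and a function g : L₂ → L₃ preserving finite meets and admissible joins, such that the composition g ∘ f does not preserve admissible joins (i.e., there is a finite join-admissible M ⊆ L₁ with g(f(⋁M)) ≠ ⋁_{m∈M} g(f(m))). -/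
/-!
In a join-admissible `M`, every sup-irreducible `a ≤ ⋁ M` lies below some member of `M`, because
`a = a ⊓ ⋁ M = ⋁ₘ (a ⊓ m)`. So a monotone map whose value at each `b` is the join of its values at
sup-irreducibles below `b` preserves admissible joins. On the diamond `M₃` (atoms `x, y, z`) the
meet-preserving map `g` collapsing `y` to `⊥` is of this kind, since `g ⊤ = g x ⊔ g z`. The
four-element Boolean lattice embeds into `M₃` as `{⊥, x, y, ⊤}`; there `{x, y}` is admissible by
distributivity, but `g (x ⊔ y) = ⊤` while `g x ⊔ g y = x`.
-/

universe u v w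

theorem joinAdmissible_of_distribLattice {L : Type*} [DistribLattice L] [BoundedOrder L]
    (M : Finset L) : JoinAdmissible M :=
  fun a => Finset.sup_inf_distrib_left M id a

theorem JoinAdmissible.exists_le_of_supIrred {L : Type*} [Lattice L] [BoundedOrder L]
    {M : Finset L} (hM : JoinAdmissible M) {a : L} (ha : SupIrred a) (haM : a ≤ M.sup id) :
    ∃ m ∈ M, a ≤ m := by
  obtain ⟨m, hm, ham⟩ := ha.finset_sup_eq (hM a ▸ inf_eq_left.2 haM)
  exact ⟨m, hm, inf_eq_left.1 ham⟩

theorem Monotone.map_sup_of_joinAdmissible {L K : Type*} [Lattice L] [BoundedOrder L]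
    [Lattice K] [BoundedOrder K] {g : L → K} (hg : Monotone g)
    (hirr : ∀ b, ∃ s : Finset L, (∀ a ∈ s, SupIrred a ∧ a ≤ b) ∧ g b ≤ s.sup g)
    {M : Finset L} (hM : JoinAdmissible M) : g (M.sup id) = M.sup g := by
  refine le_antisymm ?_ (Finset.sup_le fun m hm => hg (Finset.le_sup (f := id) hm))
  obtain ⟨s, hs, hgs⟩ := hirr (M.sup id)
  refine hgs.trans (Finset.sup_le fun a ha => ?_)
  obtain ⟨m, hm, ham⟩ := hM.exists_le_of_supIrred (hs a ha).1 (hs a ha).2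
  exact (hg ham).trans (Finset.le_sup hm)

inductive M3 : Type u
  | bot | x | y | z | top
  deriving DecidableEq

namespace M3

instance : Fintype M3.{u} :=
  ⟨{bot, x, y, z, top}, by intro a; cases a <;> decide⟩

instance : LE M3.{u} := ⟨fun a b => a = bot ∨ b = top ∨ a = b⟩

instance : DecidableRel (· ≤ · : M3.{u} → M3.{u} → Prop) := fun a b =>
  inferInstanceAs (Decidable (a = bot ∨ b = top ∨ a = b))

instance : Lattice M3.{u} where
  le := (· ≤ ·)
  le_refl := by decide
  le_trans := by decide
  le_antisymm := by decide
  sup a b := if a ≤ b then b else if b ≤ a then a else top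
  le_sup_left := by decide
  le_sup_right := by decide
  sup_le := by decide
  inf a b := if a ≤ b then a else if b ≤ a then b else bot
  inf_le_left := by decide
  inf_le_right := by decide
  le_inf := by decide

instance : BoundedOrder M3.{u} where
  top := top
  bot := bot
  le_top := by decide
  bot_le := by decide

theorem supIrred_of_ne_bot_of_ne_top : ∀ a : M3.{u}, a ≠ ⊥ → a ≠ ⊤ → SupIrred a := by
  unfold SupIrred IsMin
  decide

def collapseY : InfTopHom M3.{u} M3.{v} where
  toFun
    | bot => bot | x => x | y => bot | z => z | top => top
  map_inf' := by decide
  map_top' := rfl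

theorem collapseY_map_sup_of_joinAdmissible {M : Finset M3.{u}} (hM : JoinAdmissible M) :
    collapseY.{u, v} (M.sup id) = M.sup collapseY := by
  refine (OrderHomClass.mono collapseY).map_sup_of_joinAdmissible (fun b => ?_) hM
  have irr (a : M3.{u}) (ha : a ≠ ⊥ ∧ a ≠ ⊤ := by decide) : SupIrred a :=
    supIrred_of_ne_bot_of_ne_top a ha.1 ha.2
  cases b
  case bot => exact ⟨∅, by simp, le_rfl⟩
  case x => exact ⟨{x}, by simp [irr x], le_rfl⟩
  case y => exact ⟨{y}, by simp [irr y], le_rfl⟩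
  case z => exact ⟨{z}, by simp [irr z], le_rfl⟩
  case top => exact ⟨{x, z}, by simpa [irr x, irr z] using ⟨le_top, le_top⟩, le_rfl⟩

def embedSquare : BoundedLatticeHom (ULift.{u} (Bool × Bool)) M3.{v} where
  toFun
    | ⟨(false, false)⟩ => bot | ⟨(true, false)⟩ => x | ⟨(false, true)⟩ => y | ⟨(true, true)⟩ => top
  map_sup' := by decide
  map_inf' := by decide
  map_top' := rfl
  map_bot' := rfl

theorem collapseY_embedSquare_sup_ne :
    let M : Finset (ULift.{u} (Bool × Bool)) := {⟨(true, false)⟩, ⟨(false, true)⟩}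
    collapseY.{v, w} (embedSquare (M.sup id)) ≠ M.sup fun m => collapseY (embedSquare m) := by
  decide

end M3

/-- There are finite bounded lattices `L₁, L₂, L₃`, a bounded lattice homomorphism
`f : L₁ → L₂` and a map `g : L₂ → L₃` preserving finite meets and admissible joins,
whose composition `g ∘ f` does not preserve admissible joins. -/
theorem exists_composition_not_preserving_admissible_joins :
    ∃ (L₁ L₂ L₃ : BddLat), Finite ↥L₁ ∧ Finite ↥L₂ ∧ Finite ↥L₃ ∧
      ∃ (f : BoundedLatticeHom ↥L₁ ↥L₂) (g : ↥L₂ → ↥L₃),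
        g ⊤ = ⊤ ∧ (∀ a b : ↥L₂, g (a ⊓ b) = g a ⊓ g b) ∧
        (∀ M : Finset ↥L₂, JoinAdmissible M → g (M.sup id) = M.sup g) ∧
        ∃ M : Finset ↥L₁, JoinAdmissible M ∧
          g (f (M.sup id)) ≠ M.sup fun m => g (f m) := by
  refine ⟨BddLat.of (ULift (Bool × Bool)), BddLat.of M3, BddLat.of M3,
    Finite.of_fintype _, Finite.of_fintype _, Finite.of_fintype _,
    M3.embedSquare, M3.collapseY, map_top _, map_inf _,
    fun _ hM => M3.collapseY_map_sup_of_joinAdmissible hM,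
    _, joinAdmissible_of_distribLattice _, M3.collapseY_embedSquare_sup_ne⟩
end

section
/- Let X be a set and K a collection of subsets of X. For A ⊆ X, let U_A := (Aᶜ ×ˢ X) ∪ (X ×ˢ A) = {(x, y) ∈ X × X : x ∈ A → y ∈ A}, and let 𝒰 be the filter on X × X generated by {U_A : A ∈ K}. Then for any B ⊆ X: U_B ∈ 𝒰 if and only if B belongs to the bounded sublattice of the powerset of X generated by K, i.e., the smallest collection of subsets of X containing K, ∅ and X and closed under finite unions and finite intersections. -/
/-- The Pervin entourage `U_A = (Aᶜ × X) ∪ (X × A) = {(x, y) : x ∈ A → y ∈ A}`. -/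
def pervinEntourage {X : Type*} (A : Set X) : Set (X × X) :=
  {p : X × X | p.1 ∈ A → p.2 ∈ A}

/-- The bounded sublattice of the powerset of `X` generated by `K`: the smallest family
containing `K`, `∅` and `X`, closed under finite unions and intersections. -/
def boundedLatticeGen {X : Type*} (K : Set (Set X)) : Set (Set X) :=
  ⋂₀ {F : Set (Set X) | K ⊆ F ∧ ∅ ∈ F ∧ Set.univ ∈ F ∧
      (∀ A ∈ F, ∀ B ∈ F, A ∪ B ∈ F) ∧ (∀ A ∈ F, ∀ B ∈ F, A ∩ B ∈ F)}

/-!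
If `⋂_{C ∈ s} U_C ⊆ U_B` for a finite `s ⊆ K`, then every `y` lying in all members of `s`
that contain some `x ∈ B` lies in `B` itself, so `B` is the union over `x ∈ B` of the
intersections `⋂ {C ∈ s | x ∈ C}`. Only finitely many such intersections occur, so `B` lies
in the bounded lattice generated by `K`. Conversely, `U_∅ = U_X` is everything and
`U_A ∩ U_B` is contained in both `U_{A ∪ B}` and `U_{A ∩ B}`, so the sets `B` with
`U_B ∈ 𝒰_K` form a bounded sublattice containing `K`.
-/

open Set

namespace BoundedLatticeGen

variable {X : Type*} {K : Set (Set X)}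

theorem subset_of_closed {F : Set (Set X)} (hK : K ⊆ F) (hempty : ∅ ∈ F) (huniv : univ ∈ F)
    (hunion : ∀ A ∈ F, ∀ B ∈ F, A ∪ B ∈ F) (hinter : ∀ A ∈ F, ∀ B ∈ F, A ∩ B ∈ F) :
    boundedLatticeGen K ⊆ F :=
  sInter_subset_of_mem ⟨hK, hempty, huniv, hunion, hinter⟩

theorem mem_of_mem {A : Set X} (h : A ∈ K) : A ∈ boundedLatticeGen K :=
  fun _ hF => hF.1 h

theorem empty_mem : (∅ : Set X) ∈ boundedLatticeGen K :=
  fun _ hF => hF.2.1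

theorem univ_mem : (univ : Set X) ∈ boundedLatticeGen K :=
  fun _ hF => hF.2.2.1

theorem union_mem {A B : Set X} (hA : A ∈ boundedLatticeGen K)
    (hB : B ∈ boundedLatticeGen K) : A ∪ B ∈ boundedLatticeGen K :=
  fun F hF => hF.2.2.2.1 A (hA F hF) B (hB F hF)

theorem inter_mem {A B : Set X} (hA : A ∈ boundedLatticeGen K)
    (hB : B ∈ boundedLatticeGen K) : A ∩ B ∈ boundedLatticeGen K :=
  fun F hF => hF.2.2.2.2 A (hA F hF) B (hB F hF)

theorem mono {L : Set (Set X)} (h : K ⊆ L) : boundedLatticeGen K ⊆ boundedLatticeGen L :=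
  subset_of_closed (h.trans fun _ => mem_of_mem) empty_mem univ_mem
    (fun _ hA _ hB => union_mem hA hB) (fun _ hA _ hB => inter_mem hA hB)

theorem sInter_mem {T : Set (Set X)} (hT : T.Finite) (h : T ⊆ boundedLatticeGen K) :
    ⋂₀ T ∈ boundedLatticeGen K := by
  induction T, hT using Set.Finite.induction_on with
  | empty => simpa using univ_mem
  | @insert A T _ _ ih =>
    rw [sInter_insert]
    exact inter_mem (h (mem_insert A T)) (ih ((subset_insert A T).trans h))

theorem sUnion_mem {T : Set (Set X)} (hT : T.Finite) (h : T ⊆ boundedLatticeGen K) :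
    ⋃₀ T ∈ boundedLatticeGen K := by
  induction T, hT using Set.Finite.induction_on with
  | empty => simpa using empty_mem
  | @insert A T _ _ ih =>
    rw [sUnion_insert]
    exact union_mem (h (mem_insert A T)) (ih ((subset_insert A T).trans h))

end BoundedLatticeGen

section PervinEntourage

variable {X : Type*}

@[simp]
theorem pervinEntourage_empty : pervinEntourage (∅ : Set X) = univ := by
  ext; simp [pervinEntourage]

@[simp]
theorem pervinEntourage_univ : pervinEntourage (univ : Set X) = univ := by
  ext; simp [pervinEntourage]

theorem pervinEntourage_inter_subset_union (A B : Set X) :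
    pervinEntourage A ∩ pervinEntourage B ⊆ pervinEntourage (A ∪ B) :=
  fun _ ⟨hA, hB⟩ hx => hx.imp hA hB

theorem pervinEntourage_inter_subset_inter (A B : Set X) :
    pervinEntourage A ∩ pervinEntourage B ⊆ pervinEntourage (A ∩ B) :=
  fun _ ⟨hA, hB⟩ hx => ⟨hA hx.1, hB hx.2⟩

theorem boundedLatticeGen_subset_setOf_pervinEntourage_mem {K : Set (Set X)}
    {f : Filter (X × X)} (hK : ∀ A ∈ K, pervinEntourage A ∈ f) :
    boundedLatticeGen K ⊆ {B | pervinEntourage B ∈ f} :=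
  BoundedLatticeGen.subset_of_closed hK (by simp) (by simp)
    (fun A hA B hB => Filter.mem_of_superset (Filter.inter_mem hA hB)
      (pervinEntourage_inter_subset_union A B))
    (fun A hA B hB => Filter.mem_of_superset (Filter.inter_mem hA hB)
      (pervinEntourage_inter_subset_inter A B))

theorem eq_biUnion_sInter_of_biInter_pervinEntourage_subset {s : Set (Set X)} {B : Set X}
    (h : ⋂ C ∈ s, pervinEntourage C ⊆ pervinEntourage B) :
    B = ⋃ x ∈ B, ⋂₀ {C ∈ s | x ∈ C} := by
  refine Subset.antisymm (fun x hx => mem_biUnion hx fun _ hC => hC.2) ?_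
  simp only [iUnion_subset_iff]
  intro x hx y hy
  exact @h (x, y) (mem_iInter₂.2 fun C hC hxC => hy C ⟨hC, hxC⟩) hx

theorem mem_boundedLatticeGen_of_biInter_pervinEntourage_subset {s : Set (Set X)}
    (hs : s.Finite) {B : Set X} (h : ⋂ C ∈ s, pervinEntourage C ⊆ pervinEntourage B) :
    B ∈ boundedLatticeGen s := by
  have htraces : ((fun x => {C ∈ s | x ∈ C}) '' B).Finite :=
    hs.finite_subsets.subset (image_subset_iff.2 fun _ _ => sep_subset s _)
  rw [eq_biUnion_sInter_of_biInter_pervinEntourage_subset h, ← sUnion_image]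
  refine BoundedLatticeGen.sUnion_mem ((htraces.image sInter).subset (by rw [image_image])) ?_
  rintro _ ⟨x, -, rfl⟩
  exact BoundedLatticeGen.sInter_mem (hs.subset (sep_subset s _))
    fun C hC => BoundedLatticeGen.mem_of_mem hC.1

end PervinEntourage

/-- The blocks of the Pervin quasi-uniform space `(X, 𝒰_K)` are exactly the members of
the bounded sublattice of `𝒫(X)` generated by `K`. -/
theorem pervin_blocks (X : Type*) (K : Set (Set X)) (B : Set X) :
    pervinEntourage B ∈ Filter.generate (pervinEntourage '' K) ↔
      B ∈ boundedLatticeGen K := by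
  constructor
  · intro h
    obtain ⟨s, hsK, hs, hsub⟩ :=
      Set.exists_subset_image_finite_and.1 (Filter.mem_generate_iff.1 h)
    rw [sInter_image] at hsub
    exact BoundedLatticeGen.mono hsK
      (mem_boundedLatticeGen_of_biInter_pervinEntourage_subset hs hsub)
  · exact fun h => boundedLatticeGen_subset_setOf_pervinEntourage_mem
      (f := Filter.generate (pervinEntourage '' K))
      (fun A hA => Filter.GenerateSets.basic (mem_image_of_mem _ hA)) h
end

section
/- Let X and Y be topological spaces with X compact, and R ⊆ X × Y a relation such that (X, Y, R) is totally R-disconnected. Let U ⊆ X be a clopen set that is a downset for the quasi-order x' ≼ x defined by {y : x' R y} ⊆ {y : x R y} (i.e., x ∈ U and x' ≼ x imply x' ∈ U). Then U is a finite union of clopen R-closed sets: there exist finitely many clopen sets W₁, …, Wₙ ⊆ X with □(◇Wᵢ) = Wᵢ for each i and U = W₁ ∪ ⋯ ∪ Wₙ. -/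
/-- `◇S = {y : ∃ x ∈ S, x R y}`. -/
def dia {X Y : Type*} (R : X → Y → Prop) (S : Set X) : Set Y :=
  {y : Y | ∃ x ∈ S, R x y}

/-- `□V = {x : ∀ y, x R y → y ∈ V}`. -/
def box {X Y : Type*} (R : X → Y → Prop) (V : Set Y) : Set X :=
  {x : X | ∀ y : Y, R x y → y ∈ V}

lemma subset_boxdia {X Y : Type*} (R : X → Y → Prop) (S : Set X) :
    S ⊆ box R (dia R S) := fun w hw y hRy => ⟨w, hw, hRy⟩

lemma boxdia_mono {X Y : Type*} (R : X → Y → Prop) {S T : Set X} (h : S ⊆ T) :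
    box R (dia R S) ⊆ box R (dia R T) := by
  intro w hw y hRy
  obtain ⟨x', hx', hR⟩ := hw y hRy
  exact ⟨x', h hx', hR⟩

/-- A topological polarity `(X, Y, R)` is totally `R`-disconnected if whenever `¬ x R y`
there are clopen `U ⊆ X` and `V ⊆ Y` with `◇U = V`, `□V = U`, `x ∈ U` and `y ∉ V`. -/
def TotallyRDisconnected {X Y : Type*} [TopologicalSpace X] [TopologicalSpace Y]
    (R : X → Y → Prop) : Prop :=
  ∀ x : X, ∀ y : Y, ¬ R x y →
    ∃ (U : Set X) (V : Set Y), IsClopen U ∧ IsClopen V ∧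
      dia R U = V ∧ box R V = U ∧ x ∈ U ∧ y ∉ V

/-- In a totally `R`-disconnected polarity with `X` compact, every clopen downset of `X`
(for the quasi-order induced by `R`) is a finite union of clopen `R`-closed sets. -/
theorem clopen_downset_eq_finite_union_of_Rclosed {X Y : Type*}
    [TopologicalSpace X] [TopologicalSpace Y] [CompactSpace X] (R : X → Y → Prop)
    (htd : TotallyRDisconnected R) (U : Set X) (hU : IsClopen U)
    (hdown : ∀ x ∈ U, ∀ x' : X, {y : Y | R x' y} ⊆ {y : Y | R x y} → x' ∈ U) :
    ∃ 𝒲 : Finset (Set X),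
      (∀ W ∈ 𝒲, IsClopen W ∧ box R (dia R W) = W) ∧ U = ⋃₀ ↑𝒲 := by
  classical
  -- Step 1: for each x ∈ U, a clopen R-closed W with x ∈ W ⊆ U.
  have key : ∀ x : X, x ∈ U →
      ∃ W : Set X, IsClopen W ∧ box R (dia R W) = W ∧ x ∈ W ∧ W ⊆ U := by
    intro x hx
    have step : ∀ z : (Uᶜ : Set X),
        ∃ W : Set X, IsClopen W ∧ box R (dia R W) = W ∧ x ∈ W ∧ (z : X) ∉ W := by
      rintro ⟨z, hz⟩
      have hnle : ¬ ({y : Y | R z y} ⊆ {y : Y | R x y}) := fun h => hz (hdown x hx z h)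
      obtain ⟨y, hzy, hxy⟩ := Set.not_subset.mp hnle
      obtain ⟨W, V, hWc, hVc, hdia, hbox, hxW, hyV⟩ := htd x y hxy
      refine ⟨W, hWc, ?_, hxW, ?_⟩
      · rw [hdia, hbox]
      · intro hzW
        rw [← hbox] at hzW
        exact hyV (hzW y hzy)
    choose W hWc hWr hxW hzW using step
    have hcov : Uᶜ ⊆ ⋃ z : (Uᶜ : Set X), (W z)ᶜ := by
      intro z hz
      exact Set.mem_iUnion.mpr ⟨⟨z, hz⟩, hzW ⟨z, hz⟩⟩
    have hcomp : IsCompact (Uᶜ : Set X) := (hU.isOpen.isClosed_compl).isCompact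
    obtain ⟨s, hs⟩ := hcomp.elim_finite_subcover (fun z => (W z)ᶜ)
      (fun z => (hWc z).compl.isOpen) hcov
    refine ⟨⋂ z ∈ s, W z, ?_, ?_, ?_, ?_⟩
    · exact s.finite_toSet.isClopen_biInter (fun z _ => hWc z)
    · apply Set.Subset.antisymm
      · intro w hw
        refine Set.mem_iInter₂.mpr (fun z hzs => ?_)
        have : box R (dia R (⋂ z ∈ s, W z)) ⊆ box R (dia R (W z)) :=
          boxdia_mono R (Set.biInter_subset_of_mem hzs)
        rw [hWr z] at this
        exact this hw
      · exact subset_boxdia R _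
    · exact Set.mem_iInter₂.mpr (fun z _ => hxW z)
    · intro w hw
      by_contra hwU
      obtain ⟨z, hzs, hz⟩ := Set.mem_iUnion₂.mp (hs hwU)
      exact hz (Set.mem_iInter₂.mp hw z hzs)
  -- Step 2: cover U by finitely many such sets.
  choose W2 hW2c hW2r hxW2 hW2U using key
  have hcov2 : U ⊆ ⋃ x : (U : Set X), W2 x x.2 := by
    intro x hx
    exact Set.mem_iUnion.mpr ⟨⟨x, hx⟩, hxW2 x hx⟩
  obtain ⟨t, ht⟩ := hU.isClosed.isCompact.elim_finite_subcover
    (fun x : (U : Set X) => W2 x x.2) (fun x => (hW2c x x.2).isOpen) hcov2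
  refine ⟨t.image (fun x : (U : Set X) => W2 x x.2), ?_, ?_⟩
  · intro V hV
    obtain ⟨x, _, rfl⟩ := Finset.mem_image.mp hV
    exact ⟨hW2c x x.2, hW2r x x.2⟩
  · rw [Finset.coe_image, Set.sUnion_image]
    apply Set.Subset.antisymm
    · intro x hx
      obtain ⟨z, hzt, hz⟩ := Set.mem_iUnion₂.mp (ht hx)
      exact Set.mem_iUnion₂.mpr ⟨z, hzt, hz⟩
    · intro x hx
      obtain ⟨z, _, hz⟩ := Set.mem_iUnion₂.mp hx
      exact hW2U z z.2 hz
end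

section
/- Let D and E be bounded distributive lattices and f : D → E, g : E → D functions with f lower adjoint to g (for all d ∈ D, e ∈ E: f(d) ≤ e ↔ d ≤ g(e)). Assume the pair is doubly dense: every element of D is the join of a finite subset of the range of g, and every element of E is the meet of a finite subset of the range of f. Then for any two distinct prime filters x and x' of D, there exists a prime filter y of E such that exactly one of the conditions f[x] ⊆ y and f[x'] ⊆ y holds; i.e., the relation x R y defined by f[x] ⊆ y separates the prime filters of D. -/
/-- A prime filter of a bounded (distributive) lattice: an upward-closed subset, closed
under binary meets, containing `⊤`, not containing `⊥`, and prime. -/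
def IsPrimeFilter {D : Type*} [Lattice D] [BoundedOrder D] (x : Set D) : Prop :=
  (∀ a ∈ x, ∀ b : D, a ≤ b → b ∈ x) ∧
  (∀ a ∈ x, ∀ b ∈ x, a ⊓ b ∈ x) ∧
  (⊤ : D) ∈ x ∧ (⊥ : D) ∉ x ∧
  ∀ a b : D, a ⊔ b ∈ x → a ∈ x ∨ b ∈ x

/-- In a prime filter, membership of a finite sup gives membership of some summand. -/
lemma primeFilter_finset_sup {D : Type*} [Lattice D] [BoundedOrder D] {x : Set D}
    (hx : IsPrimeFilter x) {α : Type*} (T : Finset α) (h : α → D)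
    (hm : T.sup h ∈ x) : ∃ t ∈ T, h t ∈ x := by
  classical
  induction T using Finset.induction with
  | empty => simp only [Finset.sup_empty] at hm; exact absurd hm hx.2.2.2.1
  | @insert a s ha ih =>
    rw [Finset.sup_insert] at hm
    rcases hx.2.2.2.2 _ _ hm with h1 | h2
    · exact ⟨a, Finset.mem_insert_self a s, h1⟩
    · obtain ⟨t, ht, htx⟩ := ih h2
      exact ⟨t, Finset.mem_insert_of_mem ht, htx⟩

/-- Key asymmetric lemma. -/
lemma key_sep {D E : Type*}
    [DistribLattice D] [BoundedOrder D] [DistribLattice E] [BoundedOrder E]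
    (f : D → E) (g : E → D) (adj : ∀ (d : D) (e : E), f d ≤ e ↔ d ≤ g e)
    (hdense₁ : ∀ d : D, ∃ T : Finset E, d = T.sup g)
    (x x' : Set D) (hx : IsPrimeFilter x) (hx' : IsPrimeFilter x')
    (hd : ∃ d, d ∈ x ∧ d ∉ x') :
    ∃ y : Set E, IsPrimeFilter y ∧ f '' x' ⊆ y ∧ ¬ (f '' x ⊆ y) := by
  obtain ⟨d₀, hd₀x, hd₀x'⟩ := hd
  obtain ⟨T, hT⟩ := hdense₁ d₀
  obtain ⟨e₀, he₀T, he₀x⟩ := primeFilter_finset_sup hx T g (hT ▸ hd₀x)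
  have hge₀x' : g e₀ ∉ x' := fun h => hd₀x' (hx'.1 _ h _ (hT ▸ Finset.le_sup he₀T))
  have fmono : ∀ a b : D, a ≤ b → f a ≤ f b := fun a b hab =>
    (adj a (f b)).2 (le_trans hab ((adj b (f b)).1 le_rfl))
  -- the filter generated by f '' x'
  set Fs : Set E := {e | ∃ d ∈ x', f d ≤ e} with hFsdef
  have hFs : Order.IsPFilter Fs := by
    apply Order.IsPFilter.of_def
    · exact ⟨⊤, ⊤, hx'.2.2.1, le_top⟩
    · rintro e₁ ⟨d₁, hd₁, hfd₁⟩ e₂ ⟨d₂, hd₂, hfd₂⟩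
      refine ⟨e₁ ⊓ e₂, ⟨d₁ ⊓ d₂, hx'.2.1 _ hd₁ _ hd₂, ?_⟩, inf_le_left, inf_le_right⟩
      exact le_inf (le_trans (fmono _ _ inf_le_left) hfd₁)
        (le_trans (fmono _ _ inf_le_right) hfd₂)
    · rintro a b hab ⟨d, hd, hfd⟩
      exact ⟨d, hd, le_trans hfd hab⟩
  have hFscoe : (hFs.toPFilter : Set E) = Fs := rfl
  have hdisj : Disjoint (hFs.toPFilter : Set E) ((Order.Ideal.principal e₀ : Order.Ideal E) : Set E) := by
    rw [hFscoe, Set.disjoint_left]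
    rintro e ⟨d, hd, hfd⟩ he
    have : e ≤ e₀ := he
    exact hge₀x' (hx'.1 _ hd _ ((adj d e₀).1 (le_trans hfd this)))
  obtain ⟨J, hJprime, hIJ, hJdisj⟩ :=
    DistribLattice.prime_ideal_of_disjoint_filter_ideal hdisj
  have he₀J : e₀ ∈ J := hIJ (Order.Ideal.mem_principal.2 le_rfl)
  refine ⟨(J : Set E)ᶜ, ⟨?_, ?_, ?_, ?_, ?_⟩, ?_, ?_⟩
  · exact fun a ha b hab hbJ => ha (J.lower hab hbJ)
  · intro a ha b hb hab
    rcases hJprime.mem_or_mem hab with h | h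
    · exact ha h
    · exact hb h
  · have : (⊤ : E) ∈ Fs := ⟨⊤, hx'.2.2.1, le_top⟩
    exact Set.disjoint_left.1 hJdisj (show (⊤:E) ∈ (hFs.toPFilter : Set E) from by rw [hFscoe]; exact this)
  · exact fun h => h J.bot_mem
  · intro a b hab
    by_contra h
    push_neg at h
    exact hab (Order.Ideal.sup_mem (not_not.1 h.1) (not_not.1 h.2))
  · rintro e ⟨d, hd, rfl⟩
    exact Set.disjoint_left.1 hJdisj (show f d ∈ (hFs.toPFilter : Set E) from by rw [hFscoe]; exact ⟨d, hd, le_rfl⟩)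
  · intro hsub
    have : f (g e₀) ∈ (J : Set E)ᶜ := hsub ⟨g e₀, he₀x, rfl⟩
    exact this (J.lower ((adj _ _).2 le_rfl) he₀J)

/-- For a doubly dense adjoint pair `(D, E, f, g)` of bounded distributive lattices, the
relation `x R y ⟺ f[x] ⊆ y` separates the prime filters of `D`: for distinct prime
filters `x, x'` of `D` there is a prime filter `y` of `E` with exactly one of
`f[x] ⊆ y` and `f[x'] ⊆ y`. -/
theorem doublyDense_adjoint_separates_primeFilters {D E : Type*}
    [DistribLattice D] [BoundedOrder D] [DistribLattice E] [BoundedOrder E]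
    (f : D → E) (g : E → D) (adj : ∀ (d : D) (e : E), f d ≤ e ↔ d ≤ g e)
    (hdense₁ : ∀ d : D, ∃ T : Finset E, d = T.sup g)
    (hdense₂ : ∀ e : E, ∃ T : Finset D, e = T.inf f)
    (x x' : Set D) (hx : IsPrimeFilter x) (hx' : IsPrimeFilter x') (hne : x ≠ x') :
    ∃ y : Set E, IsPrimeFilter y ∧ Xor' (f '' x ⊆ y) (f '' x' ⊆ y) := by
  have hd : (∃ d, d ∈ x ∧ d ∉ x') ∨ (∃ d, d ∈ x' ∧ d ∉ x) := by
    by_contra h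
    push_neg at h
    exact hne (Set.Subset.antisymm (fun d hdx => h.1 d hdx) (fun d hdx => h.2 d hdx))
  rcases hd with h1 | h2
  · obtain ⟨y, hy, h1', h2'⟩ := key_sep f g adj hdense₁ x x' hx hx' h1
    exact ⟨y, hy, Or.inr ⟨h1', h2'⟩⟩
  · obtain ⟨y, hy, h1', h2'⟩ := key_sep f g adj hdense₁ x' x hx' hx h2
    exact ⟨y, hy, Or.inl ⟨h1', h2'⟩⟩
end
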